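/- Let n, d be integers with d ≥ 2 and n ≥ 2d − 1. Let L be the finite poset, ordered by set inclusion, whose elements are: the empty subset of ℤ/nℤ, the full set ℤ/nℤ, and all cyclic intervals of ℤ/nℤ of length s for 1 ≤ s ≤ d. Then the Möbius function μ of L satisfies μ(∅, ℤ/nℤ) = −1, where ∅ is the bottom element and ℤ/nℤ is the top element of L. -/

import Mathlib

open Finset

/-- The cyclic interval `{i, i+1, …, i+s-1}` of length `s` in `ZMod n`. -/
def cycInt (n : ℕ) [NeZero n] (i : ZMod n) (s : ℕ) : Finset (ZMod n) :=
  (Finset.range s).image (fun t : ℕ => i + (t : ZMod n))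

/-- Membership predicate for the poset `L`: the empty set, the full set `ZMod n`,
and all cyclic intervals of length `s` with `1 ≤ s ≤ d`. -/
def IsLElem (n d : ℕ) [NeZero n] (S : Finset (ZMod n)) : Prop :=
  S = ∅ ∨ S = Finset.univ ∨ ∃ (i : ZMod n) (s : ℕ), 1 ≤ s ∧ s ≤ d ∧ S = cycInt n i s

/-- The poset `L`, ordered by inclusion. -/
def CycPoset (n d : ℕ) [NeZero n] : Type := {S : Finset (ZMod n) // IsLElem n d S}

instance (n d : ℕ) [NeZero n] : PartialOrder (CycPoset n d) :=
  Subtype.partialOrder _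

instance (n d : ℕ) [NeZero n] : Finite (CycPoset n d) :=
  Subtype.finite

noncomputable instance (n d : ℕ) [NeZero n] : Fintype (CycPoset n d) :=
  Fintype.ofFinite _

open Classical in
/-- The Möbius function of the finite poset `L`: `μ(x, x) = 1`,
`μ(x, y) = -∑_{x ≤ z < y} μ(x, z)` for `x < y` (and `0` if `x ≤ y` fails). -/
noncomputable def moebiusL (n d : ℕ) [NeZero n] (x y : CycPoset n d) : ℤ :=
  if y = x then 1
  else if x ≤ y then
    - ∑ z ∈ (Finset.univ.filter (fun z : CycPoset n d => x ≤ z ∧ z < y)).attach,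
        moebiusL n d x z.1
  else 0
termination_by y.1.card
decreasing_by
  rename_i z
  have hz := z.2
  simp only [Finset.mem_filter, Finset.mem_univ, true_and] at hz
  exact Finset.card_lt_card (Subtype.coe_lt_coe.mpr hz.2)

/-!
Below a cyclic interval `I` of length `s ≤ d` the poset `L` contains `∅` and, since `n ≥ 2d - 1`
prevents wrap-around, exactly `s + 1 - t` intervals of length `t`. So by induction on `s`,
`μ(∅, I) = 1, -1, 1, 0, 0, …` for `s = 0, 1, 2, 3, …`: the sum over `J ≤ I` is
`1 - s + (s - 1) = 0`. Below the top there are `n` intervals of each length `1 ≤ t ≤ d`, so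
`μ(∅, ℤ/nℤ) = -(1 - n + n) = -1`.
-/

lemma ZMod.natCast_inj_of_lt {n a b : ℕ} (ha : a < n) (hb : b < n)
    (h : (a : ZMod n) = b) : a = b := by
  simpa [ZMod.natCast_eq_natCast_iff', Nat.mod_eq_of_lt ha, Nat.mod_eq_of_lt hb] using h

lemma mem_cycInt {n : ℕ} [NeZero n] {i x : ZMod n} {s : ℕ} :
    x ∈ cycInt n i s ↔ ∃ t < s, x = i + (t : ZMod n) := by
  simp [cycInt, eq_comm]

lemma card_cycInt {n : ℕ} [NeZero n] (i : ZMod n) {s : ℕ} (hs : s ≤ n) :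
    #(cycInt n i s) = s := by
  rw [cycInt, card_image_of_injOn, card_range]
  intro a ha b hb hab
  simp only [coe_range, Set.mem_Iio] at ha hb
  exact ZMod.natCast_inj_of_lt (by omega) (by omega) (add_left_cancel hab)

-- `s + t ≤ n + 1` rules out wrap-around; this is where `n ≥ 2d - 1` enters.
lemma cycInt_subset_cycInt_iff {n : ℕ} [NeZero n] {i j : ZMod n} {s t : ℕ} (ht : 1 ≤ t)
    (hst : s + t ≤ n + 1) :
    cycInt n j t ⊆ cycInt n i s ↔ ∃ a, a + t ≤ s ∧ j = i + (a : ZMod n) := by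
  constructor
  · intro h
    have hj : j ∈ cycInt n j t := mem_cycInt.2 ⟨0, ht, by simp⟩
    obtain ⟨a, ha, rfl⟩ := mem_cycInt.1 (h hj)
    obtain ⟨b, hb, hab⟩ := mem_cycInt.1 (h (mem_cycInt.2 ⟨t - 1, by omega, rfl⟩))
    have hcast : ((a + (t - 1) : ℕ) : ZMod n) = b := by
      push_cast
      exact add_left_cancel (by rw [← hab, add_assoc])
    have := ZMod.natCast_inj_of_lt (by omega) (by omega) hcast
    exact ⟨a, by omega, rfl⟩
  · rintro ⟨a, hat, rfl⟩ x hx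
    obtain ⟨u, hu, rfl⟩ := mem_cycInt.1 hx
    exact mem_cycInt.2 ⟨a + u, by omega, by push_cast; ring⟩

lemma cycInt_inj {n : ℕ} [NeZero n] {i j : ZMod n} {t : ℕ} (ht : 1 ≤ t) (htn : 2 * t ≤ n + 1) :
    cycInt n j t = cycInt n i t ↔ j = i := by
  refine ⟨fun h => ?_, fun h => h ▸ rfl⟩
  obtain ⟨a, hat, rfl⟩ := (cycInt_subset_cycInt_iff ht (by omega)).1 h.subset
  obtain rfl : a = 0 := by omega
  simp

lemma sum_comp_eq_sum_range_card_filter_mul {α : Type*} (F : Finset α) (g : α → ℕ) (f : ℕ → ℤ)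
    {m : ℕ} (hf : ∀ t, m ≤ t → f t = 0) :
    ∑ x ∈ F, f (g x) = ∑ t ∈ range m, #{x ∈ F | g x = t} * f t := by
  rw [← sum_filter_of_ne (p := fun x => g x < m) fun x _ h => not_le.1 fun hx => h (hf _ hx),
    ← sum_fiberwise_of_maps_to (g := g) (t := range m) fun x hx => mem_range.2 (mem_filter.1 hx).2]
  refine sum_congr rfl fun t ht => ?_
  rw [filter_filter, sum_congr rfl fun x hx => by rw [(mem_filter.1 hx).2.2], sum_const,
    nsmul_eq_mul]
  congr 3
  ext x
  simp only [mem_filter, and_congr_right_iff, and_iff_right_iff_imp]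
  rintro - rfl
  exact mem_range.1 ht

/-- `μ(∅, S)` for a proper element `S` of `L` with `#S = t`. -/
def moebiusOfCard : ℕ → ℤ
  | 0 => 1
  | 1 => -1
  | 2 => 1
  | _ + 3 => 0

lemma sum_moebiusOfCard {α : Type*} (F : Finset α) (g : α → ℕ) :
    ∑ x ∈ F, moebiusOfCard (g x) =
      #{x ∈ F | g x = 0} - #{x ∈ F | g x = 1} + #{x ∈ F | g x = 2} := by
  rw [sum_comp_eq_sum_range_card_filter_mul F g _ (m := 3) fun t ht => ?_]
  · simp [sum_range_succ, moebiusOfCard, sub_eq_add_neg]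
  · obtain ⟨u, rfl⟩ := Nat.exists_eq_add_of_le' ht
    rfl

namespace CycPoset

variable {n d : ℕ} [NeZero n]

open scoped Classical

instance : OrderBot (CycPoset n d) where
  bot := ⟨∅, Or.inl rfl⟩
  bot_le _ := empty_subset _

instance : OrderTop (CycPoset n d) where
  top := ⟨univ, Or.inr (Or.inl rfl)⟩
  le_top _ := subset_univ _

@[simp]
lemma coe_bot : (⊥ : CycPoset n d).1 = ∅ := rfl

@[simp]
lemma coe_top : (⊤ : CycPoset n d).1 = univ := rfl

lemma le_iff_subset {x y : CycPoset n d} : x ≤ y ↔ x.1 ⊆ y.1 := Iff.rfl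

lemma lt_iff_ssubset {x y : CycPoset n d} : x < y ↔ x.1 ⊂ y.1 := Iff.rfl

lemma exists_eq_cycInt_of_card_eq (z : CycPoset n d) {t : ℕ} (ht : 1 ≤ t) (htd : t ≤ d)
    (hdn : d < n) (hz : #z.1 = t) : ∃ j, z.1 = cycInt n j t := by
  rcases z.2 with h | h | ⟨j, s, -, hsd, h⟩
  · rw [h, card_empty] at hz
    omega
  · rw [h, card_univ, ZMod.card] at hz
    omega
  · rw [h, card_cycInt j (by omega)] at hz
    exact ⟨j, hz ▸ h⟩

lemma card_filter_eq_card (A : Finset (Finset (ZMod n))) (hA : ∀ S ∈ A, IsLElem n d S)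
    (p : CycPoset n d → Prop) [DecidablePred p] (hp : ∀ z, p z ↔ z.1 ∈ A) :
    #{z | p z} = #A := by
  refine card_nbij Subtype.val (fun z hz => (hp z).1 (mem_filter.1 hz).2)
    Subtype.val_injective.injOn fun S hS =>
      ⟨⟨S, hA S hS⟩, mem_filter.2 ⟨mem_univ _, (hp _).2 hS⟩, rfl⟩

lemma card_filter_and_card_eq_zero (p : CycPoset n d → Prop) [DecidablePred p] (hp : p ⊥) :
    #{z | p z ∧ #z.1 = 0} = 1 := by
  rw [card_filter_eq_card {∅} (by simp [IsLElem]), card_singleton]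
  intro z
  rw [card_eq_zero, mem_singleton]
  refine ⟨And.right, fun hz => ⟨?_, hz⟩⟩
  rwa [show z = ⊥ from Subtype.ext hz]

lemma card_filter_le_and_card_eq {z : CycPoset n d} {i : ZMod n} {s t : ℕ}
    (hz : z.1 = cycInt n i s) (hsd : s ≤ d) (ht : 1 ≤ t) (htd : t ≤ d) (hdn : d < n)
    (hn : 2 * d ≤ n + 1) :
    #{w | w ≤ z ∧ #w.1 = t} = s + 1 - t := by
  have hsub : ∀ {j}, cycInt n j t ⊆ cycInt n i s ↔ ∃ a, a + t ≤ s ∧ j = i + (a : ZMod n) :=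
    cycInt_subset_cycInt_iff ht (by omega)
  rw [card_filter_eq_card (n := n) ((range (s + 1 - t)).image fun a : ℕ => cycInt n (i + a) t)]
  · rw [card_image_of_injOn, card_range]
    intro a ha b hb hab
    simp only [coe_range, Set.mem_Iio] at ha hb
    exact ZMod.natCast_inj_of_lt (by omega) (by omega)
      (add_left_cancel ((cycInt_inj ht (by omega)).1 hab))
  · simp only [mem_image, mem_range]
    rintro S ⟨a, -, rfl⟩
    exact Or.inr (Or.inr ⟨_, t, ht, htd, rfl⟩)
  · intro w
    simp only [mem_image, mem_range, le_iff_subset, hz]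
    constructor
    · rintro ⟨hle, hw⟩
      obtain ⟨j, hj⟩ := exists_eq_cycInt_of_card_eq w ht htd hdn hw
      rw [hj, hsub] at hle
      obtain ⟨a, ha, rfl⟩ := hle
      exact ⟨a, by omega, hj.symm⟩
    · rintro ⟨a, ha, hw⟩
      rw [← hw, hsub, card_cycInt _ (by omega)]
      exact ⟨⟨a, by omega, rfl⟩, rfl⟩

lemma card_filter_lt_top_and_card_eq {t : ℕ} (ht : 1 ≤ t) (htd : t ≤ d) (hdn : d < n)
    (hn : 2 * d ≤ n + 1) :
    #{w : CycPoset n d | w < ⊤ ∧ #w.1 = t} = n := by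
  rw [card_filter_eq_card (n := n) (univ.image fun j => cycInt n j t)]
  · rw [card_image_of_injective _ fun j j' h => (cycInt_inj ht (by omega)).1 h, card_univ,
      ZMod.card]
  · simp only [mem_image, mem_univ, true_and]
    rintro S ⟨j, rfl⟩
    exact Or.inr (Or.inr ⟨j, t, ht, htd, rfl⟩)
  · intro w
    simp only [mem_image, mem_univ, true_and, lt_iff_ssubset]
    constructor
    · rintro ⟨-, hw⟩
      obtain ⟨j, hj⟩ := exists_eq_cycInt_of_card_eq w ht htd hdn hw
      exact ⟨j, hj.symm⟩
    · rintro ⟨j, hw⟩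
      have hcard : #w.1 = t := by rw [← hw, card_cycInt _ (by omega)]
      refine ⟨ssubset_univ_iff.2 fun h => ?_, hcard⟩
      rw [h, card_univ, ZMod.card] at hcard
      omega

lemma moebiusL_bot_eq_neg_sum {y : CycPoset n d} (hy : y ≠ ⊥) :
    moebiusL n d ⊥ y = -∑ z with z < y, moebiusL n d ⊥ z := by
  rw [moebiusL, if_neg hy, if_pos bot_le, sum_attach _ (moebiusL n d ⊥)]
  simp only [bot_le, true_and]

theorem moebiusL_bot_eq_moebiusOfCard (hd : 2 ≤ d) (hn : 2 * d ≤ n + 1) (z : CycPoset n d)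
    (hz : z ≠ ⊤) : moebiusL n d ⊥ z = moebiusOfCard #z.1 := by
  rcases z.2 with h | h | ⟨i, s, hs1, hsd, h⟩
  · rw [show z = ⊥ from Subtype.ext h, moebiusL, if_pos rfl]
    rfl
  · exact absurd (Subtype.ext h) hz
  · have hs : #z.1 = s := by rw [h, card_cycInt _ (by omega)]
    have hbot : z ≠ ⊥ := by
      rintro rfl
      exact (show 0 ≠ s by omega) hs
    have hle : univ.filter (· ≤ z) = insert z (univ.filter (· < z)) := by
      ext w
      simp [le_iff_lt_or_eq, or_comm]
    have hsum : ∑ w with w ≤ z, moebiusOfCard #w.1 = 0 := by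
      rw [sum_moebiusOfCard, filter_filter, filter_filter, filter_filter,
        card_filter_and_card_eq_zero (· ≤ z) bot_le,
        card_filter_le_and_card_eq h hsd le_rfl (by omega) (by omega) hn,
        card_filter_le_and_card_eq h hsd (by omega) hd (by omega) hn]
      omega
    rw [hle, sum_insert (by simp), hs] at hsum
    rw [moebiusL_bot_eq_neg_sum hbot, hs, sum_congr rfl fun w hw =>
      moebiusL_bot_eq_moebiusOfCard hd hn w (mem_filter.1 hw).2.ne_top]
    linarith
termination_by #z.1
decreasing_by exact card_lt_card (mem_filter.1 hw).2

end CycPoset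

/-- For `d ≥ 2` and `n ≥ 2d - 1`, the Möbius function of the poset `L` (consisting of
`∅`, `ZMod n`, and all cyclic intervals of length `1 ≤ s ≤ d`, ordered by inclusion)
satisfies `μ(∅, ZMod n) = -1`. -/
theorem stmt14 (n d : ℕ) [NeZero n] (hd : 2 ≤ d) (hn : 2 * d - 1 ≤ n) :
    moebiusL n d ⟨∅, Or.inl rfl⟩ ⟨Finset.univ, Or.inr (Or.inl rfl)⟩ = -1 := by
  classical
  have hdn : d < n := by omega
  have hn' : 2 * d ≤ n + 1 := by omega
  have htop : (⊤ : CycPoset n d) ≠ ⊥ := fun h =>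
    NeZero.ne n (by simpa using congrArg (fun z : CycPoset n d => #z.1) h)
  change moebiusL n d ⊥ ⊤ = -1
  rw [CycPoset.moebiusL_bot_eq_neg_sum htop, sum_congr rfl fun w hw =>
      CycPoset.moebiusL_bot_eq_moebiusOfCard hd hn' w (mem_filter.1 hw).2.ne,
    sum_moebiusOfCard, filter_filter, filter_filter, filter_filter,
    CycPoset.card_filter_and_card_eq_zero (· < ⊤) (bot_lt_iff_ne_bot.2 htop),
    CycPoset.card_filter_lt_top_and_card_eq le_rfl (by omega) hdn hn',
    CycPoset.card_filter_lt_top_and_card_eq (by omega) hd hdn hn']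
  ring
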